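/- Conversely, if all eigenvalues of A ∈ ℝ^{n×n} have negative real part and Q is symmetric PSD, then Y = ∫₀^∞ exp(Aᵀ t) Q exp(A t) dt converges and satisfies Aᵀ Y + Y A + Q = 0. -/

import Mathlib

/-!
On a generalized eigenvector `v` of `A` for the eigenvalue `μ`, `exp (t A) v` is `e^{tμ}` times a
polynomial in `t`, so when every eigenvalue has real part `< δ`, every entry of `exp (t A)` is
`O(e^{δ t})`. For a Hurwitz matrix we may take `δ < 0`; then `g t = exp (t Aᵀ) Q exp (t A)` decays
exponentially, hence is integrable on `(0, ∞)` and tends to `0`. Since `g' = Aᵀ g + g A`,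
integrating over `(0, ∞)` gives `Aᵀ Y + Y A = 0 - g 0 = -Q`.
-/

open Matrix MeasureTheory Filter Asymptotics Topology NormedSpace
open scoped Nat

theorem Real.isBigO_pow_mul_exp_of_lt (j : ℕ) {a b : ℝ} (hab : a < b) :
    (fun t : ℝ => t ^ j * Real.exp (a * t)) =O[atTop] fun t => Real.exp (b * t) := by
  refine ((isLittleO_pow_exp_pos_mul_atTop j (sub_pos.2 hab)).isBigO.mul
    (isBigO_refl (fun t => Real.exp (a * t)) _)).congr_right fun t => ?_
  rw [← Real.exp_add]
  ring_nf

namespace Matrix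

theorem isBigO_mul_mul_apply {α l m o p : Type*} [Fintype m] [Fintype o] {L : Filter α}
    {F : α → Matrix l m ℝ} {G : α → Matrix o p ℝ} {f g : α → ℝ}
    (hF : ∀ i j, (fun t => F t i j) =O[L] f) (hG : ∀ i j, (fun t => G t i j) =O[L] g)
    (Q : Matrix m o ℝ) (i : l) (j : p) :
    (fun t => (F t * Q * G t) i j) =O[L] fun t => f t * g t := by
  simp only [mul_apply, Finset.sum_mul]
  exact IsBigO.fun_sum fun k _ => IsBigO.fun_sum fun r _ =>
    (((hF i r).mul (hG k j)).const_mul_left (Q r k)).congr_left fun t => by ring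

section Integral

variable {α l m o : Type*} [Fintype m] [MeasurableSpace α] {μ : Measure α}

theorem integrable_mul_apply {F : α → Matrix m o ℝ} (hF : ∀ i j, Integrable (fun x => F x i j) μ)
    (M : Matrix l m ℝ) (i : l) (j : o) : Integrable (fun x => (M * F x) i j) μ := by
  simp only [mul_apply]
  exact integrable_finsetSum _ fun k _ => (hF k j).const_mul _

theorem integrable_apply_mul {F : α → Matrix l m ℝ} (hF : ∀ i j, Integrable (fun x => F x i j) μ)
    (M : Matrix m o ℝ) (i : l) (j : o) : Integrable (fun x => (F x * M) i j) μ := by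
  simp only [mul_apply]
  exact integrable_finsetSum _ fun k _ => (hF i k).mul_const _

theorem integral_mul_apply {F : α → Matrix m o ℝ} (hF : ∀ i j, Integrable (fun x => F x i j) μ)
    (M : Matrix l m ℝ) (i : l) (j : o) :
    ∫ x, (M * F x) i j ∂μ = ∑ k, M i k * ∫ x, F x k j ∂μ := by
  simp only [mul_apply]
  rw [integral_finsetSum _ fun k _ => (hF k j).const_mul _]
  simp only [integral_const_mul]

theorem integral_apply_mul {F : α → Matrix l m ℝ} (hF : ∀ i j, Integrable (fun x => F x i j) μ)
    (M : Matrix m o ℝ) (i : l) (j : o) :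
    ∫ x, (F x * M) i j ∂μ = ∑ k, (∫ x, F x i k ∂μ) * M k j := by
  simp only [mul_apply]
  rw [integral_finsetSum _ fun k _ => (hF i k).mul_const _]
  simp only [integral_mul_const]

end Integral

variable {n : Type*} [Fintype n]

theorem mul_add_mul_add_eq_zero_of_hasDerivAt_apply {A B : Matrix n n ℝ} {g : ℝ → Matrix n n ℝ}
    (hderiv : ∀ t i j, HasDerivAt (fun s => g s i j) ((B * g t + g t * A) i j) t)
    (hint : ∀ i j, IntegrableOn (fun t => g t i j) (Set.Ioi 0))
    (hlim : ∀ i j, Tendsto (fun t => g t i j) atTop (𝓝 0))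
    {Y : Matrix n n ℝ} (hY : ∀ i j, Y i j = ∫ t in Set.Ioi 0, g t i j) :
    B * Y + Y * A + g 0 = 0 := by
  ext i j
  have hFTC := integral_Ioi_of_hasDerivAt_of_tendsto' (fun t _ => hderiv t i j)
    ((integrable_mul_apply hint B i j).add (integrable_apply_mul hint A i j)) (hlim i j)
  simp only [add_apply, integral_add (integrable_mul_apply hint B i j)
    (integrable_apply_mul hint A i j), integral_mul_apply hint, integral_apply_mul hint] at hFTC
  simp only [add_apply, mul_apply, hY, zero_apply]
  linarith

variable [DecidableEq n]

section OperatorNorm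

-- `exp` does not depend on the norm; the operator norm only serves to invoke the Banach-algebra API.
attribute [local instance] Matrix.linftyOpNormedRing Matrix.linftyOpNormedAlgebra

theorem exp_smul_mulVec_of_pow_sub_smul_one_mulVec_eq_zero {A : Matrix n n ℂ} {μ : ℂ}
    {v : n → ℂ} {k : ℕ} (hv : (A - μ • 1) ^ k *ᵥ v = 0) (c : ℂ) :
    exp (c • A) *ᵥ v =
      Complex.exp (c * μ) • ∑ j ∈ Finset.range k, (c ^ j / j ! : ℂ) • ((A - μ • 1) ^ j *ᵥ v) := by
  set N := A - μ • 1
  have hsplit : c • A = (c * μ) • (1 : Matrix n n ℂ) + c • N := by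
    simp only [N, smul_sub, smul_smul]
    abel
  have hscalar : exp ((c * μ) • (1 : Matrix n n ℂ)) = Complex.exp (c * μ) • 1 := by
    rw [smul_one_eq_diagonal, exp_diagonal, smul_one_eq_diagonal]
    simp [Complex.exp_eq_exp_ℂ]
  have hseries : HasSum (fun m => (c ^ m / m ! : ℂ) • (N ^ m *ᵥ v)) (exp (c • N) *ᵥ v) := by
    convert (exp_series_hasSum_exp' (𝕂 := ℂ) (c • N)).map (mulVec.addMonoidHomLeft v)
      (continuous_id.matrix_mulVec continuous_const) using 1
    · ext m : 1
      simp [mulVec.addMonoidHomLeft, smul_pow, smul_mulVec, smul_smul, div_eq_inv_mul]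
    · rfl
  have htail : ∀ m ∉ Finset.range k, (c ^ m / m ! : ℂ) • (N ^ m *ᵥ v) = 0 := by
    intro m hm
    obtain ⟨j, rfl⟩ := Nat.exists_eq_add_of_le (not_lt.mp (Finset.mem_range.not.mp hm))
    rw [add_comm, pow_add N, ← mulVec_mulVec, hv, mulVec_zero, smul_zero]
  rw [hsplit, exp_add_of_commute _ _ ((Commute.one_left _).smul_left _), hscalar, smul_mul_assoc,
    one_mul, smul_mulVec, (hasSum_sum_of_ne_finset_zero htail).unique hseries]

theorem exp_map_algebraMap {𝕜 : Type*} [RCLike 𝕜] (A : Matrix n n ℝ) :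
    (exp A).map (algebraMap ℝ 𝕜) = exp (A.map (algebraMap ℝ 𝕜)) :=
  map_exp (algebraMap ℝ 𝕜).mapMatrix (continuous_id.matrix_map RCLike.continuous_ofReal) A

theorem hasDerivAt_exp_smul_mul_mul_exp_smul_apply (A B Q : Matrix n n ℝ) (t : ℝ) (i j : n) :
    HasDerivAt (fun s : ℝ => (exp (s • B) * Q * exp (s • A)) i j)
      ((B * (exp (t • B) * Q * exp (t • A)) + exp (t • B) * Q * exp (t • A) * A) i j) t := by
  have h := ((hasDerivAt_exp_smul_const' B t).mul_const Q).mul (hasDerivAt_exp_smul_const A t)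
  let entry : Matrix n n ℝ →L[ℝ] ℝ :=
    ⟨entryLinearMap ℝ ℝ i j, (continuous_apply j).comp (continuous_apply i)⟩
  refine (entry.hasFDerivAt.comp_hasDerivAt t h).congr_deriv ?_
  have hval : B * exp (t • B) * Q * exp (t • A) + exp (t • B) * Q * (exp (t • A) * A) =
      B * (exp (t • B) * Q * exp (t • A)) + exp (t • B) * Q * exp (t • A) * A := by
    simp only [mul_assoc]
  exact congrArg (fun M : Matrix n n ℝ => M i j) hval

end OperatorNorm

theorem isBigO_exp_smul_mulVec_of_mem_maxGenEigenspace {A : Matrix n n ℂ} {μ : ℂ} {v : n → ℂ}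
    (hv : v ∈ Module.End.maxGenEigenspace (toLinAlgEquiv' A) μ) {δ : ℝ} (hμ : μ.re < δ) :
    (fun t : ℝ => exp ((t : ℂ) • A) *ᵥ v) =O[atTop] fun t => Real.exp (δ * t) := by
  obtain ⟨k, hk⟩ := (Module.End.mem_maxGenEigenspace _ _ _).1 hv
  replace hk : (A - μ • 1) ^ k *ᵥ v = 0 := by
    rwa [← toLinAlgEquiv'_apply, map_pow, map_sub, map_smul, map_one]
  set w := fun j => (A - μ • 1) ^ j *ᵥ v
  refine (IsBigO.of_norm_eventuallyLE (g := fun t =>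
      ∑ j ∈ Finset.range k, ‖w j‖ / j ! * (t ^ j * Real.exp (μ.re * t))) ?_).trans
    (IsBigO.fun_sum fun j _ => (Real.isBigO_pow_mul_exp_of_lt j hμ).const_mul_left _)
  filter_upwards [eventually_ge_atTop 0] with t ht
  rw [exp_smul_mulVec_of_pow_sub_smul_one_mulVec_eq_zero hk, norm_smul, Complex.norm_exp,
    Complex.re_ofReal_mul, mul_comm t]
  calc _ ≤ Real.exp (μ.re * t) * ∑ j ∈ Finset.range k, t ^ j / j ! * ‖w j‖ := by
        gcongr
        refine (norm_sum_le _ _).trans_eq (Finset.sum_congr rfl fun j _ => ?_)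
        rw [norm_smul, norm_div, norm_pow, Complex.norm_real, Real.norm_of_nonneg ht,
          Complex.norm_natCast]
    _ = _ := by
        rw [Finset.mul_sum]
        exact Finset.sum_congr rfl fun j _ => by ring

theorem isBigO_exp_smul_mulVec {A : Matrix n n ℂ} {δ : ℝ} (hA : ∀ μ ∈ spectrum ℂ A, μ.re < δ)
    (v : n → ℂ) : (fun t : ℝ => exp ((t : ℂ) • A) *ᵥ v) =O[atTop] fun t => Real.exp (δ * t) := by
  have hv : v ∈ ⨆ μ, Module.End.maxGenEigenspace (toLinAlgEquiv' A) μ := by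
    rw [Module.End.iSup_maxGenEigenspace_eq_top]
    trivial
  refine Submodule.iSup_induction _ hv (motive := fun v =>
      (fun t : ℝ => exp ((t : ℂ) • A) *ᵥ v) =O[atTop] fun t => Real.exp (δ * t))
    (fun μ x hx => ?_) (by simpa only [mulVec_zero] using isBigO_zero _ _)
    fun x y hx hy => by simpa only [mulVec_add] using hx.add hy
  rcases eq_or_ne x 0 with rfl | hx0
  · simpa only [mulVec_zero] using isBigO_zero _ _
  have hμ : μ ∈ spectrum ℂ A := by
    rw [← AlgEquiv.spectrum_eq toLinAlgEquiv' A]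
    refine Module.End.hasUnifEigenvalue_iff_mem_spectrum.mp (.lt (k := ⊤) one_pos fun h => hx0 ?_)
    rwa [Module.End.maxGenEigenspace, h, Submodule.mem_bot] at hx
  exact isBigO_exp_smul_mulVec_of_mem_maxGenEigenspace hx (hA μ hμ)

theorem isBigO_exp_smul_apply {A : Matrix n n ℂ} {δ : ℝ} (hA : ∀ μ ∈ spectrum ℂ A, μ.re < δ)
    (i j : n) : (fun t : ℝ => exp ((t : ℂ) • A) i j) =O[atTop] fun t => Real.exp (δ * t) := by
  refine (isBigO_of_le _ fun t => ?_).trans (isBigO_exp_smul_mulVec hA (Pi.single j 1))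
  rw [mulVec_single_one]
  exact norm_le_pi_norm (fun i => exp ((t : ℂ) • A) i j) i

theorem isBigO_exp_smul_apply_of_spectrum_map_re_lt {A : Matrix n n ℝ} {δ : ℝ}
    (hA : ∀ μ ∈ spectrum ℂ (A.map (algebraMap ℝ ℂ)), μ.re < δ) (i j : n) :
    (fun t : ℝ => exp (t • A) i j) =O[atTop] fun t => Real.exp (δ * t) := by
  refine Complex.isBigO_ofReal_left.mp ((isBigO_exp_smul_apply hA i j).congr_left fun t => ?_)
  have hsmul : (t : ℂ) • A.map (algebraMap ℝ ℂ) = (t • A).map (algebraMap ℝ ℂ) := by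
    ext
    simp
  rw [hsmul, ← exp_map_algebraMap, map_apply, Complex.coe_algebraMap]

theorem exists_neg_forall_spectrum_re_lt {A : Matrix n n ℂ} (hA : ∀ μ ∈ spectrum ℂ A, μ.re < 0) :
    ∃ δ < 0, ∀ μ ∈ spectrum ℂ A, μ.re < δ := by
  have : ∀ᶠ δ in 𝓝[<] (0 : ℝ), ∀ μ ∈ spectrum ℂ A, μ.re < δ :=
    A.finite_spectrum.eventually_all.2 fun μ hμ =>
      nhdsWithin_le_nhds (eventually_gt_nhds (hA μ hμ))
  obtain ⟨δ, hδ, h⟩ := (eventually_mem_nhdsWithin.and this).exists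
  exact ⟨δ, hδ, h⟩

end Matrix

theorem hurwitz_implies_lyapunov_integral_general (n : ℕ)
    (A Q : Matrix (Fin n) (Fin n) ℝ)
    (hA : ∀ μ ∈ spectrum ℂ (A.map (algebraMap ℝ ℂ)), μ.re < 0) :
    ∃ Y : Matrix (Fin n) (Fin n) ℝ,
      (∀ i j : Fin n,
        IntegrableOn
          (fun t : ℝ =>
            (NormedSpace.exp (t • Aᵀ) * Q * NormedSpace.exp (t • A)) i j)
          (Set.Ioi 0)) ∧
      (∀ i j : Fin n,
        Y i j =
          ∫ t in Set.Ioi (0 : ℝ),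
            (NormedSpace.exp (t • Aᵀ) * Q * NormedSpace.exp (t • A)) i j) ∧
      Aᵀ * Y + Y * A + Q = 0 := by
  obtain ⟨δ, hδ, hspec⟩ := exists_neg_forall_spectrum_re_lt hA
  have hexpA := isBigO_exp_smul_apply_of_spectrum_map_re_lt hspec
  have hexpAT (i j : Fin n) :
      (fun t : ℝ => exp (t • Aᵀ) i j) =O[atTop] fun t => Real.exp (δ * t) := by
    simpa only [← transpose_smul, exp_transpose, transpose_apply] using hexpA j i
  set g := fun t : ℝ => exp (t • Aᵀ) * Q * exp (t • A)
  have hderiv := hasDerivAt_exp_smul_mul_mul_exp_smul_apply A Aᵀ Q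
  have hdecay (i j : Fin n) : (fun t => g t i j) =O[atTop] fun t => Real.exp (-(-2 * δ) * t) :=
    (isBigO_mul_mul_apply hexpAT hexpA Q i j).congr_right fun t => by
      rw [← Real.exp_add]
      ring_nf
  have hint (i j : Fin n) : IntegrableOn (fun t => g t i j) (Set.Ioi 0) :=
    integrable_of_isBigO_exp_neg (by linarith)
      (fun t _ => (hderiv t i j).continuousAt.continuousWithinAt) (hdecay i j)
  have hlim (i j : Fin n) : Tendsto (fun t => g t i j) atTop (𝓝 0) :=
    (hdecay i j).trans_tendsto (Real.tendsto_exp_atBot.comp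
      (tendsto_id.const_mul_atTop_of_neg (by linarith)))
  refine ⟨of fun i j => ∫ t in Set.Ioi 0, g t i j, hint, fun _ _ => rfl, ?_⟩
  have hg0 : g 0 = Q := by simp [g]
  rw [← hg0]
  exact mul_add_mul_add_eq_zero_of_hasDerivAt_apply hderiv hint hlim fun _ _ => rfl

theorem hurwitz_implies_lyapunov_integral (n : ℕ)
    (A Q : Matrix (Fin n) (Fin n) ℝ)
    (hA : ∀ μ ∈ spectrum ℂ (A.map (algebraMap ℝ ℂ)), μ.re < 0)
    (hQ : Q.PosSemidef) :
    ∃ Y : Matrix (Fin n) (Fin n) ℝ,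
      (∀ i j : Fin n,
        IntegrableOn
          (fun t : ℝ =>
            (NormedSpace.exp (t • Aᵀ) * Q * NormedSpace.exp (t • A)) i j)
          (Set.Ioi 0)) ∧
      (∀ i j : Fin n,
        Y i j =
          ∫ t in Set.Ioi (0 : ℝ),
            (NormedSpace.exp (t • Aᵀ) * Q * NormedSpace.exp (t • A)) i j) ∧
      Aᵀ * Y + Y * A + Q = 0 :=
  hurwitz_implies_lyapunov_integral_general n A Q hA
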